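/- Let s, x, y be three distinct vertices in a finite connected chordal graph. If s is simplicial and the line determined by s and x equals the line determined by s and y, then the line determined by x and y consists of all the vertices of the graph. -/

import Mathlib

/-- `b` lies between `a` and `c` in the metric space induced by a graph `G`. -/
def SimpleGraph.Btw {V : Type*} (G : SimpleGraph V) (a b c : V) : Prop :=
  a ≠ b ∧ b ≠ c ∧ a ≠ c ∧ G.dist a b + G.dist b c = G.dist a c

/-- The line determined by two distinct vertices `u` and `v`. -/
def SimpleGraph.line {V : Type*} (G : SimpleGraph V) (u v : V) : Set V :=
  {u, v} ∪ {p | G.Btw p u v ∨ G.Btw u p v ∨ G.Btw u v p}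

/-- A graph is chordal if every cycle of length at least four has a chord;
equivalently, it contains no induced cycle of length at least four. -/
def SimpleGraph.IsChordal {V : Type*} (G : SimpleGraph V) : Prop :=
  ∀ n : ℕ, 4 ≤ n → IsEmpty (SimpleGraph.cycleGraph n ↪g G)

/-- A vertex is simplicial if its neighbours are pairwise adjacent. -/
def SimpleGraph.IsSimplicialVertex {V : Type*} (G : SimpleGraph V) (s : V) : Prop :=
  ∀ a b : V, G.Adj s a → G.Adj s b → a ≠ b → G.Adj a b

/-!
Off the line `sx = sy`, every vertex `p` sees `x` between itself and `y`. On the line, the two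
descriptions of the position of `p` relative to `s` (a simplicial vertex is never strictly between
two vertices) leave only positions that put `p` on the line `xy`. The claim off the line is proved by
induction on `(d(p, y), d(s, p))`, stepping from `p` to a neighbour `q` closer to `y`. If `q` lies on
the line, either `d(s, q) = d(s, p)`, and the triangle condition (adjacent vertices equidistant from
`s` have a common neighbour closer to `s`) produces a smaller counterexample; or `y` lies between `s`
and `q`, which is impossible because the neighbours of `q` closer to `s` form a clique.

Both facts about chordal graphs follow from one: a chordless path whose ends are equidistant from
`w` and whose other vertices are farther from `w` has length at most one. Extending such a path at
both ends by neighbours closer to `w` gives a path of the same kind one level lower, unless a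
chordless cycle of length at least four appears.
-/

namespace SimpleGraph

variable {V : Type*} {G : SimpleGraph V}

theorem Connected.dist_triangle_left (hconn : G.Connected) (u v w : V) :
    G.dist u v ≤ G.dist w u + G.dist w v := by
  rw [dist_comm (u := w) (v := u)]
  exact hconn.dist_triangle

theorem Connected.dist_triangle_right (hconn : G.Connected) (u v w : V) :
    G.dist u v ≤ G.dist u w + G.dist v w := by
  rw [dist_comm (u := v) (v := w)]
  exact hconn.dist_triangle

theorem Connected.exists_adj_dist_add_one_eq (hconn : G.Connected) {u v : V} (h : u ≠ v) :
    ∃ u', G.Adj u u' ∧ G.dist v u' + 1 = G.dist v u := by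
  obtain ⟨p, hp⟩ := hconn.exists_walk_length_eq_dist u v
  cases p with
  | nil => exact absurd rfl h
  | @cons _ u' _ huu' q =>
    refine ⟨u', huu', ?_⟩
    have hq : G.dist u' v ≤ q.length := dist_le q
    have htri : G.dist u v ≤ G.dist u u' + G.dist u' v := hconn.dist_triangle
    rw [Walk.length_cons] at hp
    rw [dist_eq_one_iff_adj.mpr huu'] at htri
    rw [dist_comm (u := v) (v := u'), dist_comm (u := v) (v := u)]
    omega

theorem Connected.dist_add_dist_eq_of_adj (hconn : G.Connected) {x y p q : V} (hpq : G.Adj p q)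
    (hqy : G.dist y q + 1 = G.dist y p) (hq : G.dist x q + G.dist x y = G.dist y q) :
    G.dist x p + G.dist x y = G.dist y p := by
  have := hpq.diff_dist_adj (u := x)
  have := hconn.dist_triangle_left y p x
  omega

namespace Walk

variable {u v w : V}

theorem IsChordless.reverse {p : G.Walk u v} (hp : p.IsChordless) : p.reverse.IsChordless := by
  rw [isChordless_iff_forall_mem_edges] at hp ⊢
  simp only [support_reverse, List.mem_reverse, edges_reverse]
  exact hp

theorem IsChordless.cons {p : G.Walk v w} (hp : p.IsChordless) (h : G.Adj u v)
    (hu : ∀ x ∈ p.support, G.Adj u x → x = v) : (cons h p).IsChordless := by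
  rw [isChordless_iff_forall_mem_edges] at hp ⊢
  simp only [support_cons, edges_cons, List.mem_cons]
  rintro x y (rfl | hx) (rfl | hy) hxy
  · exact absurd hxy (G.loopless.irrefl _)
  · exact Or.inl (by rw [hu y hy hxy])
  · exact Or.inl (by rw [hu x hx hxy.symm, Sym2.eq_swap])
  · exact Or.inr (hp hx hy hxy)

theorem IsChordless.concat {p : G.Walk u v} (hp : p.IsChordless) (h : G.Adj v w)
    (hw : ∀ x ∈ p.support, G.Adj w x → x = v) : (p.concat h).IsChordless := by
  have := (hp.reverse.cons h.symm (by simpa using hw)).reverse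
  rwa [← reverse_concat, reverse_reverse] at this

end Walk

open Walk

theorem IsChordal.length_eq_three_of_isChordless (hG : G.IsChordal) {u : V} {c : G.Walk u u}
    (hc : c.IsCycle) (hcl : c.IsChordless) : c.length = 3 := by
  have h3 := hc.three_le_length
  obtain ⟨n, hn⟩ : ∃ n, c.length = n + 2 := ⟨c.length - 2, by omega⟩
  by_contra hne
  have hinj : Function.Injective fun i : Fin (n + 2) => c.getVert i := fun i j hij =>
    Fin.ext (hc.getVert_injOn' (by simp only [Set.mem_ofPred_eq]; omega)
      (by simp only [Set.mem_ofPred_eq]; omega) hij)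
  have hsucc (i : Fin (n + 2)) : c.getVert ↑(i + 1) = c.getVert (i + 1) := by
    rw [Fin.val_add_one]
    split_ifs with hi
    · rw [hi, Fin.val_last, ← hn, getVert_length, getVert_zero]
    · rfl
  have hadj (i : Fin (n + 2)) : G.Adj (c.getVert i) (c.getVert ↑(i + 1)) :=
    hsucc i ▸ c.adj_getVert_succ (by have := i.isLt; omega)
  refine (hG (n + 2) (by omega)).false ⟨⟨_, hinj⟩, fun {i j} => ?_⟩
  simp only [Function.Embedding.coeFn_mk, cycleGraph_adj, sub_eq_iff_eq_add']
  constructor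
  · intro hij
    obtain ⟨k, hk, hke⟩ := (mk_mem_edges_iff_exists c).mp
      (hcl.mem_edges (c.getVert_mem_support _) (c.getVert_mem_support _) hij)
    set k' : Fin (n + 2) := ⟨k, by omega⟩
    rw [← hsucc k'] at hke
    rcases Sym2.eq_iff.mp hke with ⟨h1, h2⟩ | ⟨h1, h2⟩
    · exact Or.inr (by rw [← hinj (a₁ := k') h1, ← hinj (a₁ := k' + 1) h2])
    · exact Or.inl (by rw [← hinj (a₁ := k' + 1) h2, ← hinj (a₁ := k') h1])
  · rintro (rfl | rfl)
    · exact (hadj j).symm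
    · exact hadj i

theorem IsChordal.length_le_one_of_adj_ends (hG : G.IsChordal) {a b z : V} {p : G.Walk a b}
    (hp : p.IsPath) (hpc : p.IsChordless) (hz : z ∉ p.support) (hza : G.Adj z a)
    (hzb : G.Adj z b) (hzp : ∀ v ∈ p.support, G.Adj z v → v = a ∨ v = b) :
    p.length ≤ 1 := by
  by_contra! hlen
  have hab : a ≠ b := by
    rintro rfl
    rw [isPath_iff_nil.mp hp |>.eq_nil, length_nil] at hlen
    omega
  have hC : (cons hza (p.concat hzb.symm)).IsCycle := by
    refine (cons_isCycle_iff _ _).mpr ⟨hp.concat hz hzb.symm, fun he => ?_⟩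
    rw [edges_concat, List.concat_eq_append, List.mem_append, List.mem_singleton] at he
    rcases he with he | he
    · exact hz (p.fst_mem_support_of_mem_edges he)
    · rcases Sym2.eq_iff.mp he with ⟨rfl, -⟩ | ⟨-, rfl⟩
      · exact hz p.end_mem_support
      · exact hab rfl
  have hCl : (cons hza (p.concat hzb.symm)).IsChordless := by
    rw [isChordless_iff_forall_mem_edges] at hpc ⊢
    have hsupp : ∀ x ∈ (cons hza (p.concat hzb.symm)).support, x = z ∨ x ∈ p.support := by
      simp only [support_cons, support_concat, List.mem_cons, List.mem_append]
      tauto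
    have hedges : ∀ v, v = a ∨ v = b → s(z, v) ∈ (cons hza (p.concat hzb.symm)).edges := by
      rintro v (rfl | rfl) <;> simp [edges_concat, Sym2.eq_swap]
    intro x y hx hy hxy
    rcases hsupp x hx with rfl | hxp <;> rcases hsupp y hy with rfl | hyp
    · exact absurd hxy (G.loopless.irrefl _)
    · exact hedges y (hzp y hyp hxy)
    · exact Sym2.eq_swap ▸ hedges x (hzp x hxp hxy.symm)
    · simp [edges_concat, hpc hxp hyp hxy]
  have := hG.length_eq_three_of_isChordless hC hCl
  simp only [length_cons, length_concat] at this
  omega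

section Ladder

variable {w a b : V} {k : ℕ} {p : G.Walk a b}

theorem notMem_support_and_adj_eq_of_dist_eq
    (ha : G.dist w a = k + 1) (hb : G.dist w b = k + 1)
    (hint : ∀ v ∈ p.support, v = a ∨ v = b ∨ k + 1 < G.dist w v) {c : V}
    (hc : G.dist w c = k) :
    c ∉ p.support ∧ ∀ v ∈ p.support, G.Adj c v → v = a ∨ v = b := by
  refine ⟨fun hcp => ?_, fun v hv hcv => ?_⟩
  · rcases hint c hcp with rfl | rfl | h <;> omega
  · rcases hint v hv with h | h | h
    · exact Or.inl h
    · exact Or.inr h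
    · rcases hcv.diff_dist_adj (u := w) with h' | h' | h' <;> omega

theorem IsChordal.isPath_and_isChordless_cons_concat (hG : G.IsChordal) (hp : p.IsPath)
    (hpc : p.IsChordless) (ha : G.dist w a = k + 1) (hb : G.dist w b = k + 1)
    (hint : ∀ v ∈ p.support, v = a ∨ v = b ∨ k + 1 < G.dist w v) {a' b' : V}
    (ha' : G.Adj a' a) (hb' : G.Adj b b') (hda' : G.dist w a' = k) (hdb' : G.dist w b' = k)
    (hna : ¬ G.Adj a' b) (hnb : ¬ G.Adj a b') :
    (cons ha' (p.concat hb')).IsPath ∧ (cons ha' (p.concat hb')).IsChordless := by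
  obtain ⟨ha'p, ha'adj⟩ := notMem_support_and_adj_eq_of_dist_eq ha hb hint hda'
  obtain ⟨hb'p, hb'adj⟩ := notMem_support_and_adj_eq_of_dist_eq ha hb hint hdb'
  have hab : a ≠ b := by rintro rfl; exact hna ha'
  have hne : a' ≠ b' := by rintro rfl; exact hna hb'.symm
  have ha'adj' : ∀ v ∈ p.support, G.Adj a' v → v = a := fun v hv h =>
    (ha'adj v hv h).resolve_right (by rintro rfl; exact hna h)
  have hb'adj' : ∀ v ∈ p.support, G.Adj b' v → v = b := fun v hv h =>
    (hb'adj v hv h).resolve_left (by rintro rfl; exact hnb h.symm)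
  have hpath := hp.concat hb'p hb'
  have hchordless := hpc.concat hb' hb'adj'
  have hsupp : ∀ v ∈ (p.concat hb').support, v ∈ p.support ∨ v = b' := by
    simp [support_concat]
  have ha'q : a' ∉ (p.concat hb').support := fun h =>
    (hsupp a' h).elim ha'p hne
  -- a cycle `a' a ... b b' a'` would be chordless
  have hnab' : ¬ G.Adj a' b' := by
    intro h
    have := hG.length_le_one_of_adj_ends hpath hchordless ha'q ha' h fun v hv hv' =>
      (hsupp v hv).imp (fun hvp => ha'adj' v hvp hv') id
    rw [length_concat] at this
    exact hab (eq_of_length_eq_zero (p := p) (by omega))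
  refine ⟨hpath.cons ha'q, hchordless.cons ha' fun v hv hv' => ?_⟩
  rcases hsupp v hv with hvp | rfl
  · exact ha'adj' v hvp hv'
  · exact absurd hv' hnab'

variable (hconn : G.Connected) (hG : G.IsChordal)
include hconn hG

theorem IsChordal.length_le_one_of_forall_lt_dist (hp : p.IsPath) (hpc : p.IsChordless)
    (ha : G.dist w a = k + 1) (hb : G.dist w b = k + 1)
    (hint : ∀ v ∈ p.support, v = a ∨ v = b ∨ k + 1 < G.dist w v) : p.length ≤ 1 := by
  induction k using Nat.strong_induction_on generalizing a b with
  | _ k ih =>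
  by_contra! hlen
  obtain ⟨a', ha', hda'⟩ := hconn.exists_adj_dist_add_one_eq (u := a) (v := w) (by
    rintro rfl; simp at ha)
  obtain ⟨b', hb', hdb'⟩ := hconn.exists_adj_dist_add_one_eq (u := b) (v := w) (by
    rintro rfl; simp at hb)
  obtain ⟨ha'p, ha'adj⟩ := notMem_support_and_adj_eq_of_dist_eq ha hb hint (c := a') (by omega)
  obtain ⟨hb'p, hb'adj⟩ := notMem_support_and_adj_eq_of_dist_eq ha hb hint (c := b') (by omega)
  by_cases hna : G.Adj a' b
  · exact absurd (hG.length_le_one_of_adj_ends hp hpc ha'p ha'.symm hna ha'adj) (by omega)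
  by_cases hnb : G.Adj a b'
  · exact absurd (hG.length_le_one_of_adj_ends hp hpc hb'p hnb.symm hb'.symm hb'adj)
      (by omega)
  obtain ⟨hq, hqc⟩ := hG.isPath_and_isChordless_cons_concat hp hpc ha hb hint ha'.symm hb'
    (by omega) (by omega) hna hnb
  rcases k with _ | k
  · have : a' = b' := by
      rw [← hconn.dist_eq_zero_iff.mp (by omega : G.dist w a' = 0),
        ← hconn.dist_eq_zero_iff.mp (by omega : G.dist w b' = 0)]
    exact hna (this ▸ hb'.symm)
  · have := ih k (by omega) hq hqc (by omega) (by omega) fun v hv => by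
      simp only [support_cons, support_concat, List.mem_cons, List.mem_append,
        List.not_mem_nil, or_false] at hv
      rcases hv with rfl | hvp | rfl
      · exact Or.inl rfl
      · rcases hint v hvp with rfl | rfl | h <;> omega
      · exact Or.inr (Or.inl rfl)
    simp only [length_cons, length_concat] at this
    omega

theorem IsChordal.exists_adj_adj_dist_eq {u v : V} (huv : G.Adj u v) (hu : G.dist w u = k + 1)
    (hv : G.dist w v = k + 1) : ∃ z, G.Adj u z ∧ G.Adj v z ∧ G.dist w z = k := by
  obtain ⟨a', ha', hda'⟩ := hconn.exists_adj_dist_add_one_eq (u := u) (v := w) (by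
    rintro rfl; simp at hu)
  obtain ⟨b', hb', hdb'⟩ := hconn.exists_adj_dist_add_one_eq (u := v) (v := w) (by
    rintro rfl; simp at hv)
  by_cases hna : G.Adj a' v
  · exact ⟨a', ha', hna.symm, by omega⟩
  by_cases hnb : G.Adj u b'
  · exact ⟨b', hnb, hb', by omega⟩
  have hint : ∀ x ∈ huv.toWalk.support, x = u ∨ x = v ∨ k + 1 < G.dist w x := by
    simp
  obtain ⟨hq, hqc⟩ := hG.isPath_and_isChordless_cons_concat huv.isPath_toWalk
    huv.isChordless_toWalk hu hv hint ha'.symm hb' (by omega) (by omega) hna hnb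
  rcases k with _ | k
  · have : a' = b' := by
      rw [← hconn.dist_eq_zero_iff.mp (by omega : G.dist w a' = 0),
        ← hconn.dist_eq_zero_iff.mp (by omega : G.dist w b' = 0)]
    exact absurd (this ▸ hb'.symm) hna
  · have := hG.length_le_one_of_forall_lt_dist (w := w) (k := k) hconn hq hqc (by omega)
      (by omega) fun x hx => by
      simp only [support_cons, support_concat, support_nil, List.mem_cons,
        List.mem_append, List.not_mem_nil, or_false] at hx
      rcases hx with rfl | (rfl | rfl) | rfl
      · exact Or.inl rfl
      · exact Or.inr (Or.inr (by omega))
      · exact Or.inr (Or.inr (by omega))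
      · exact Or.inr (Or.inl rfl)
    simp at this

theorem IsChordal.adj_of_adj_of_adj_of_dist_eq {t u v : V} (htu : G.Adj t u) (htv : G.Adj t v)
    (huv : u ≠ v) (hu : G.dist w u = k + 1) (hv : G.dist w v = k + 1)
    (ht : G.dist w t = k + 2) : G.Adj u v := by
  by_contra hnuv
  have hpath : (cons htu.symm htv.toWalk).IsPath :=
    htv.isPath_toWalk.cons (by simp [htu.ne.symm, huv])
  have hchordless : (cons htu.symm htv.toWalk).IsChordless :=
    htv.isChordless_toWalk.cons htu.symm fun x hx hux => by
      simp only [Adj.support_toWalk, List.mem_cons, List.not_mem_nil, or_false] at hx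
      rcases hx with rfl | rfl
      · rfl
      · exact absurd hux hnuv
  have := hG.length_le_one_of_forall_lt_dist hconn hpath hchordless hu hv fun x hx => by
    simp only [support_cons, support_nil, List.mem_cons, List.not_mem_nil, or_false] at hx
    rcases hx with rfl | rfl | rfl
    · exact Or.inl rfl
    · exact Or.inr (Or.inr (by omega))
    · exact Or.inr (Or.inl rfl)
  simp at this

theorem IsChordal.dist_le_of_adj_of_dist_add_dist_eq {y p q : V} (hqy : q ≠ y)
    (hwyq : G.dist w y + G.dist y q = G.dist w q) (hpq : G.Adj p q)
    (hwp : G.dist w p + 1 = G.dist w q) : G.dist y p ≤ G.dist y q := by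
  obtain ⟨u, hqu, huy⟩ := hconn.exists_adj_dist_add_one_eq hqy
  have hwu : G.dist w u + 1 = G.dist w q := by
    have := hqu.diff_dist_adj (u := w)
    have := hconn.dist_triangle (u := w) (v := y) (w := u)
    omega
  have hpu : p = u ∨ G.Adj p u := by
    by_cases h : p = u
    · exact Or.inl h
    rcases Nat.eq_zero_or_pos (G.dist w p) with h0 | h0
    · refine Or.inl ((hconn.dist_eq_zero_iff.mp h0).symm.trans (hconn.dist_eq_zero_iff.mp ?_))
      omega
    exact Or.inr (hG.adj_of_adj_of_adj_of_dist_eq hconn hpq.symm hqu h (w := w)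
      (k := G.dist w p - 1) (by omega) (by omega) (by omega))
  rcases hpu with rfl | hpu
  · omega
  · have := hpu.diff_dist_adj (u := y)
    omega

end Ladder

section Line

theorem btw_comm {a b c : V} : G.Btw a b c ↔ G.Btw c b a := by
  have := G.dist_comm (u := a) (v := b)
  have := G.dist_comm (u := b) (v := c)
  have := G.dist_comm (u := a) (v := c)
  constructor <;> rintro ⟨h₁, h₂, h₃, h₄⟩ <;>
    exact ⟨h₂.symm, h₁.symm, h₃.symm, by omega⟩

theorem line_comm (u v : V) : G.line u v = G.line v u := by
  ext p
  simp only [line, Set.mem_union, Set.mem_insert_iff, Set.mem_singleton_iff, Set.mem_ofPred_eq,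
    btw_comm (a := p) (b := u) (c := v), btw_comm (a := u) (b := p) (c := v),
    btw_comm (a := u) (b := v) (c := p)]
  tauto

theorem left_mem_line (u v : V) : u ∈ G.line u v := Or.inl (Or.inl rfl)

theorem right_mem_line (u v : V) : v ∈ G.line u v := Or.inl (Or.inr rfl)

theorem mem_line_iff {u v p : V} (huv : u ≠ v) :
    p ∈ G.line u v ↔ G.dist u p + G.dist u v = G.dist v p ∨
      G.dist u p + G.dist v p = G.dist u v ∨ G.dist u v + G.dist v p = G.dist u p := by
  by_cases hpu : p = u
  · subst hpu
    exact iff_of_true (left_mem_line p v) (Or.inl (by rw [dist_self, zero_add, dist_comm]))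
  by_cases hpv : p = v
  · subst hpv
    exact iff_of_true (right_mem_line u p) (Or.inr (Or.inl (by rw [dist_self, add_zero])))
  have := G.dist_comm (u := p) (v := u)
  have := G.dist_comm (u := p) (v := v)
  simp only [line, Btw, Set.mem_union, Set.mem_insert_iff, Set.mem_singleton_iff,
    Set.mem_ofPred_eq, hpu, hpv, huv, Ne.symm hpu, Ne.symm hpv, Ne, not_false_eq_true,
    true_and, or_self, false_or]
  constructor <;> intro h <;> omega

variable {s : V} (hconn : G.Connected) (hs : G.IsSimplicialVertex s)
include hconn hs

theorem IsSimplicialVertex.not_btw (u v : V) : ¬ G.Btw u s v := by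
  rintro ⟨hus, hsv, -, h⟩
  obtain ⟨a, hsa, hua⟩ := hconn.exists_adj_dist_add_one_eq hus.symm
  obtain ⟨b, hsb, hvb⟩ := hconn.exists_adj_dist_add_one_eq hsv
  have hab : G.dist a b ≤ 1 := by
    by_cases hab : a = b
    · simp [hab]
    · exact (dist_eq_one_iff_adj.mpr (hs a b hsa hsb hab)).le
  have h₁ : G.dist u v ≤ G.dist u a + G.dist a v := hconn.dist_triangle
  have h₂ : G.dist a v ≤ G.dist a b + G.dist b v := hconn.dist_triangle
  rw [dist_comm (u := b), dist_comm (u := s) (v := v)] at *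
  omega

theorem IsSimplicialVertex.mem_line_iff {x p : V} (hsx : s ≠ x) (hps : p ≠ s) :
    p ∈ G.line s x ↔
      G.dist s p + G.dist x p = G.dist s x ∨ G.dist s x + G.dist x p = G.dist s p := by
  have hpsx : G.dist s p + G.dist s x ≠ G.dist x p := fun h => by
    by_cases hpx : p = x
    · subst hpx
      simp only [dist_self] at h
      exact hsx (hconn.dist_eq_zero_iff.mp (by omega))
    · refine hs.not_btw hconn p x ⟨hps, hsx, hpx, ?_⟩
      rwa [dist_comm (u := p), dist_comm (u := p)]
  rw [SimpleGraph.mem_line_iff hsx]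
  constructor
  · rintro (h | h | h)
    · exact absurd h hpsx
    · exact Or.inl h
    · exact Or.inr h
  · rintro (h | h)
    · exact Or.inr (Or.inl h)
    · exact Or.inr (Or.inr h)

theorem IsSimplicialVertex.ne_of_adj_of_dist_add_one_eq {p q y : V} (hps : p ≠ s) (hsy : s ≠ y)
    (hpq : G.Adj p q) (hqy : G.dist y q + 1 = G.dist y p) : q ≠ s := by
  intro hqs
  rw [hqs] at hpq hqy
  have hpy : p ≠ y := by rintro rfl; simp at hqy
  refine hs.not_btw hconn p y ⟨hps, hsy, hpy, ?_⟩
  rw [dist_eq_one_iff_adj.mpr hpq, dist_comm (u := s), dist_comm (u := p)]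
  omega

variable (hG : G.IsChordal) {x y : V} (hsx : s ≠ x) (hsy : s ≠ y) (hxy : x ≠ y)
  (hline : G.line s x = G.line s y) (hsxy : G.dist s x + G.dist x y = G.dist s y)
include hG hsx hsy hxy hline hsxy

theorem IsSimplicialVertex.exists_notMem_line_of_adj_mem_line {p q : V} (hp : p ∉ G.line s x)
    (hpB : G.dist x p + G.dist x y ≠ G.dist y p) (hpq : G.Adj p q)
    (hqy : G.dist y q + 1 = G.dist y p) (hq : q ∈ G.line s x) :
    ∃ z ∉ G.line s x, G.dist x z + G.dist x y ≠ G.dist y z ∧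
      G.dist y z ≤ G.dist y p ∧ G.dist s z < G.dist s p := by
  have tri (v : V) :
      G.dist y v ≤ G.dist x y + G.dist x v ∧ G.dist x y ≤ G.dist x v + G.dist y v ∧
      G.dist s v ≤ G.dist s x + G.dist x v ∧ G.dist s x ≤ G.dist s v + G.dist x v ∧
      G.dist s v ≤ G.dist s y + G.dist y v ∧ G.dist s y ≤ G.dist s v + G.dist y v :=
    ⟨hconn.dist_triangle_left y v x, hconn.dist_triangle_right x y v, hconn.dist_triangle,
      hconn.dist_triangle_right s x v, hconn.dist_triangle, hconn.dist_triangle_right s y v⟩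
  have hmx (v : V) (hv : v ≠ s) := hs.mem_line_iff hconn hsx hv
  have hmy (v : V) (hv : v ≠ s) := hs.mem_line_iff hconn hsy hv
  have hps : p ≠ s := fun h => hp (by rw [h]; exact left_mem_line s x)
  have hpLx := (hmx p hps).not.mp hp
  have hpLy := (hmy p hps).not.mp (hline ▸ hp)
  have hm : 0 < G.dist x y := hconn.pos_dist_of_ne hxy
  have ha : 0 < G.dist s x := hconn.pos_dist_of_ne hsx
  have hK : 0 < G.dist s p := hconn.pos_dist_of_ne hps.symm
  obtain ⟨tp₁, tp₂, tp₃, tp₄, tp₅, tp₆⟩ := tri p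
  obtain ⟨tq₁, tq₂, tq₃, tq₄, tq₅, tq₆⟩ := tri q
  have hxq := hpq.diff_dist_adj (u := x)
  have hqB : G.dist x q + G.dist x y ≠ G.dist y q := fun h =>
    hpB (hconn.dist_add_dist_eq_of_adj hpq hqy h)
  have hqs := hs.ne_of_adj_of_dist_add_one_eq hconn hps hsy hpq hqy
  -- if `q` were between `s` and `x`, then `x` would be between `q` and `y`
  obtain hsqx | hsxq := (hmx q hqs).mp hq
  · omega
  have hqLy := (hmy q hqs).mp (hline ▸ hq)
  rcases hpq.diff_dist_adj (u := s) with hJ | hJ | hJ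
  · -- the common neighbour `z` of `p` and `q` closer to `s` is the smaller counterexample
    obtain ⟨z, hpz, hqz, hz⟩ :=
      hG.exists_adj_adj_dist_eq hconn hpq (w := s) (k := G.dist s p - 1) (by omega) (by omega)
    obtain ⟨tz₁, tz₂, tz₃, tz₄, tz₅, tz₆⟩ := tri z
    have hyz := hqz.diff_dist_adj (u := y)
    have hxz := hpz.diff_dist_adj (u := x)
    have hzs : z ≠ s := fun h => by simp [h] at hz; omega
    refine ⟨z, fun hzL => ?_, fun hzB => ?_, by omega, by omega⟩
    · rcases (hmx z hzs).mp hzL with h | h <;> omega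
    · omega
  · -- `p` off the line forces `y` between `s` and `q`
    have hqy_ne : q ≠ y := fun h => by rw [h, dist_self] at hqy; rw [h] at hJ; omega
    rcases hqLy with hsqy | hsyq
    · omega
    · have := hG.dist_le_of_adj_of_dist_add_dist_eq hconn hqy_ne hsyq hpq (by omega)
      omega
  · omega

theorem IsSimplicialVertex.dist_add_dist_eq_of_notMem_line (p : V) (hp : p ∉ G.line s x) :
    G.dist x p + G.dist x y = G.dist y p := by
  by_contra hpB
  have hpy : p ≠ y := fun h => hp (by rw [h, hline]; exact right_mem_line s y)
  obtain ⟨q, hpq, hqy⟩ := hconn.exists_adj_dist_add_one_eq hpy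
  by_cases hq : q ∈ G.line s x
  · obtain ⟨z, hz, hzB, hyz, hsz⟩ :=
      hs.exists_notMem_line_of_adj_mem_line hconn hG hsx hsy hxy hline hsxy hp hpB hpq hqy hq
    exact hzB (IsSimplicialVertex.dist_add_dist_eq_of_notMem_line z hz)
  · exact hpB (hconn.dist_add_dist_eq_of_adj hpq hqy
      (IsSimplicialVertex.dist_add_dist_eq_of_notMem_line q hq))
termination_by (G.dist y p, G.dist s p)
decreasing_by all_goals rw [Prod.lex_def]; omega

end Line

end SimpleGraph

theorem stmt2_general {V : Type*} (G : SimpleGraph V) (hconn : G.Connected)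
    (hG : G.IsChordal) (s x y : V) (hsx : s ≠ x) (hsy : s ≠ y) (hxy : x ≠ y)
    (hsimp : G.IsSimplicialVertex s) (hline : G.line s x = G.line s y) :
    G.line x y = Set.univ := by
  have hx := (hsimp.mem_line_iff hconn hsy hsx.symm).mp
    (hline ▸ SimpleGraph.right_mem_line s x)
  have hyx : 0 < G.dist y x := hconn.pos_dist_of_ne hxy.symm
  wlog hlt : G.dist s x < G.dist s y generalizing x y
  · rw [SimpleGraph.line_comm]
    have hy := (hsimp.mem_line_iff hconn hsx hsy.symm).mp
      (hline ▸ SimpleGraph.right_mem_line s y)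
    exact this y x hsy hsx hxy.symm hline.symm hy (hconn.pos_dist_of_ne hxy) (by omega)
  have hsxy : G.dist s x + G.dist x y = G.dist s y := by
    rw [G.dist_comm (u := x)]
    omega
  refine Set.eq_univ_of_forall fun p => (SimpleGraph.mem_line_iff hxy).mpr ?_
  by_cases hp : p ∈ G.line s x
  · by_cases hps : p = s
    · rw [hps, G.dist_comm (u := x), G.dist_comm (u := y)]
      exact Or.inl hsxy
    have hpx := (hsimp.mem_line_iff hconn hsx hps).mp hp
    have hpy := (hsimp.mem_line_iff hconn hsy hps).mp (hline ▸ hp)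
    omega
  · exact Or.inl (hsimp.dist_add_dist_eq_of_notMem_line hconn hG hsx hsy hxy hline hsxy p hp)

/-- Lemma 2: in a finite connected chordal graph, if `s` is simplicial, the vertices
`s`, `x`, `y` are distinct, and the lines `sx` and `sy` coincide, then the line `xy`
consists of all vertices of the graph. -/
theorem stmt2 {V : Type*} [Fintype V] (G : SimpleGraph V) (hconn : G.Connected)
    (hG : G.IsChordal) (s x y : V) (hsx : s ≠ x) (hsy : s ≠ y) (hxy : x ≠ y)
    (hsimp : G.IsSimplicialVertex s) (hline : G.line s x = G.line s y) :
    G.line x y = Set.univ :=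
  stmt2_general G hconn hG s x y hsx hsy hxy hsimp hline
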